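/- Conversely, if nonnegative Puiseux series x₁, …, x_n satisfy the lifted system (x_{i₀} ≤ x_{i₁}+⋯+x_{i_k} for each max-constraint, x_{i₀}² ≤ x_{i₁}x_{i₂} for each average-constraint, x_{i₀} = t^c for each constant-constraint), then (val(x₁),…,val(x_n)) ∈ (ℚ ∪ {-∞})^n is a solution of the original max-average constraint system. -/

import Mathlib

/-!
For `0 ≤ x ≤ y` in the lexicographically ordered Hahn series we have `|x| ≤ |y|`, which
forces `orderTop y ≤ orderTop x`; hence `val` is monotone on nonnegative series. Combined with
the valuation rules `val (x * y) = val x + val y` and `val (∑ xᵢ) ≤ max (val xᵢ)`, each lifted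
constraint becomes the corresponding max-average constraint. Squares are nonnegative, so the
average constraint needs no sign hypothesis.
-/

noncomputable section

/-- The field of (generalized) real Puiseux series, modeled as Hahn series over `ℚᵒᵈ`
(so that the leading term has the *largest* exponent, matching the "t large" convention). -/
abbrev K : Type := HahnSeries ℚᵒᵈ ℝ

/-- The leading coefficient of a Puiseux series (0 for the zero series). -/
noncomputable def leadCoeff (x : K) : ℝ := x.coeff x.order

/-- `x ≥ 0` in the ordered field of Puiseux series: leading coefficient is `≥ 0`. -/
def Knonneg (x : K) : Prop := 0 ≤ leadCoeff x

/-- The order relation on Puiseux series. -/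
def Kle (x y : K) : Prop := Knonneg (y - x)

/-- The valuation (leading exponent) of a Puiseux series, `⊥ = -∞` for the zero series. -/
noncomputable def val (x : K) : WithBot ℚ :=
  open scoped Classical in
  if x = 0 then ⊥ else (OrderDual.ofDual x.order : ℚ)

/-- The monomial `t^r`. -/
noncomputable def tmon (r : ℚ) : K := HahnSeries.single (OrderDual.toDual r) (1 : ℝ)

/-- `t^v` for `v ∈ ℚ ∪ {-∞}`, with `t^{-∞} = 0`. -/
noncomputable def tmonBot (v : WithBot ℚ) : K := WithBot.recBotCoe 0 tmon v

/-- A max-average constraint on variables indexed by `Fin n`. -/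
inductive MACon (n : ℕ) where
  /-- `x i₀ ≤ max (x (idx 0), …, x (idx (k-1)))` -/
  | maxC (i₀ : Fin n) (k : ℕ) (idx : Fin k → Fin n) : MACon n
  /-- `x i₀ ≤ (x i₁ + x i₂)/2` -/
  | avgC (i₀ i₁ i₂ : Fin n) : MACon n
  /-- `x i₀ = c` for a rational constant `c` -/
  | constC (i₀ : Fin n) (c : ℚ) : MACon n

/-- Satisfaction of a max-average constraint over `ℚ ∪ {-∞}`. -/
def SatQ {n : ℕ} (x : Fin n → WithBot ℚ) : MACon n → Prop
  | .maxC i₀ _ idx => x i₀ ≤ Finset.univ.sup (fun j => x (idx j))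
  | .avgC i₀ i₁ i₂ => x i₀ ≤ (x i₁ + x i₂).map (fun q => q / 2)
  | .constC i₀ c => x i₀ = (c : WithBot ℚ)

/-- Satisfaction of the lifted constraint over the Puiseux series field. -/
def SatK {n : ℕ} (y : Fin n → K) : MACon n → Prop
  | .maxC i₀ _ idx => Kle (y i₀) (∑ j, y (idx j))
  | .avgC i₀ i₁ i₂ => Kle ((y i₀) ^ 2) (y i₁ * y i₂)
  | .constC i₀ c => y i₀ = tmon c


theorem HahnSeries.orderTop_le_orderTop_of_abs_le {Γ R : Type*} [LinearOrder Γ] [LinearOrder R]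
    [AddCommGroup R] [IsOrderedAddMonoid R] {x y : Lex (HahnSeries Γ R)} (h : |x| ≤ |y|) :
    (ofLex y).orderTop ≤ (ofLex x).orderTop :=
  not_lt.1 fun hlt => (HahnSeries.abs_lt_abs_of_orderTop_ofLex hlt).not_ge h

theorem WithBot.le_map_half_of_add_self_le {α : Type*} [Field α] [LinearOrder α]
    [IsStrictOrderedRing α] {a b : WithBot α} (h : a + a ≤ b) : a ≤ b.map (· / 2) := by
  induction a with
  | bot => exact bot_le
  | coe a =>
    induction b with
    | bot => exact absurd h (by simp)
    | coe b =>
      rw [← WithBot.coe_add, WithBot.coe_le_coe] at h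
      rw [WithBot.map_coe, WithBot.coe_le_coe, le_div_iff₀ two_pos]
      linarith

lemma knonneg_iff_toLex_nonneg (x : K) : Knonneg x ↔ 0 ≤ toLex x := by
  rw [Knonneg, leadCoeff, ← HahnSeries.leadingCoeff_eq]
  exact HahnSeries.leadingCoeff_nonneg_iff

lemma kle_iff_toLex_le (x y : K) : Kle x y ↔ toLex x ≤ toLex y := by
  rw [Kle, knonneg_iff_toLex_nonneg, toLex_sub, sub_nonneg]

lemma knonneg_sq (x : K) : Knonneg (x ^ 2) :=
  (knonneg_iff_toLex_nonneg _).2 (sq_nonneg (toLex x))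

lemma val_eq_ofDual_addVal (x : K) : val x = WithTop.ofDual (HahnSeries.addVal ℚᵒᵈ ℝ x) := by
  by_cases hx : x = 0
  · simp [val, hx]
  · rw [val, if_neg hx, HahnSeries.addVal_apply_of_ne hx]
    rfl

lemma val_le_val_of_kle {x y : K} (hx : Knonneg x) (hxy : Kle x y) : val x ≤ val y := by
  rw [knonneg_iff_toLex_nonneg] at hx
  rw [kle_iff_toLex_le] at hxy
  rw [val_eq_ofDual_addVal, val_eq_ofDual_addVal, WithTop.ofDual_le_ofDual_iff,
    HahnSeries.addVal_apply, HahnSeries.addVal_apply]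
  exact HahnSeries.orderTop_le_orderTop_of_abs_le (abs_le_abs_of_nonneg hx hxy)

lemma val_mul (x y : K) : val (x * y) = val x + val y := by
  simp only [val_eq_ofDual_addVal, AddValuation.map_mul]
  generalize HahnSeries.addVal ℚᵒᵈ ℝ x = a
  generalize HahnSeries.addVal ℚᵒᵈ ℝ y = b
  cases a <;> cases b <;> rfl

lemma val_sum_le {ι : Type*} (s : Finset ι) (f : ι → K) :
    val (∑ j ∈ s, f j) ≤ s.sup (fun j => val (f j)) := by
  rw [val_eq_ofDual_addVal, ← WithBot.toDual_le_iff]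
  refine AddValuation.map_le_sum _ fun i hi => WithBot.toDual_le_iff.2 ?_
  rw [← val_eq_ofDual_addVal]
  exact Finset.le_sup (f := fun j => val (f j)) hi

lemma val_tmon (c : ℚ) : val (tmon c) = c := by
  rw [val_eq_ofDual_addVal, HahnSeries.addVal_apply, tmon,
    HahnSeries.orderTop_single one_ne_zero]
  rfl

lemma satQ_val_of_satK {n : ℕ} {y : Fin n → K} (hnn : ∀ i, Knonneg (y i)) {c : MACon n}
    (h : SatK y c) : SatQ (fun i => val (y i)) c := by
  cases c with
  | maxC i₀ k idx => exact (val_le_val_of_kle (hnn i₀) h).trans (val_sum_le _ _)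
  | avgC i₀ i₁ i₂ =>
    have hv := val_le_val_of_kle (knonneg_sq (y i₀)) h
    rw [sq, val_mul, val_mul] at hv
    exact WithBot.le_map_half_of_add_self_le hv
  | constC i₀ c => exact (congrArg val h).trans (val_tmon c)

/-- if nonnegative Puiseux series satisfy the lifted system, then their
valuations satisfy the original max-average constraint system over `ℚ ∪ {-∞}`. -/
theorem val_solution {n : ℕ} (cs : List (MACon n)) (y : Fin n → K)
    (hnn : ∀ i, Knonneg (y i)) (hsat : ∀ c ∈ cs, SatK y c) :
    ∀ c ∈ cs, SatQ (fun i => val (y i)) c :=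
  fun c hc => satQ_val_of_satK hnn (hsat c hc)
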